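/- arXiv:1102.4327 — 2 statements merged into one kernel-verified Lean document; each statement's English description precedes it below -/
import Mathlib

section
/- Let n ≥ 1 and let Iₙ ⊆ ℤ[X,Y] be the ideal generated by X^{n+1} and Rₙ = ∑_{i=0}^{n} (-1)^{i} X^{n-i} Y^{i}. For 0 ≤ j ≤ n−1 set C_j = ∑_{i=0}^{j} (−1)^{j−i} X^{n−i} Y^{i}. Then for all k with 0 ≤ k ≤ n−1: C_j · X^{k} Y^{n−1−k} − X^{n−1} Y^{n} ∈ Iₙ if k = j, and C_j · X^{k} Y^{n−1−k} ∈ Iₙ if k ≠ j. -/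
/-!
Modulo `Iₙ` we have `X^(n+1) = 0`, hence also `Y^(n+1) = 0` because
`(X + Y) Rₙ = X^(n+1) ± Y^(n+1)`. In `C_j X^k Y^(n-1-k)`, a sum of monomials of degree `2n - 1`,
only the terms `i = k` and `i = k + 1` survive: multiples of `X^n Y^(n-1)` and `X^(n-1) Y^n`.
These two classes coincide, since `Y^(n-1) Rₙ` reduces to their difference. For `k = j` only the
first term occurs, with coefficient `1`; for `k < j` the two coefficients have opposite signs;
for `k > j` nothing survives.
-/

open MvPolynomial Finset

section

variable {R : Type*} [CommRing R]

theorem add_mul_sum_neg_one_pow_mul (x y : R) (n : ℕ) :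
    (x + y) * ∑ i ∈ range (n + 1), (-1) ^ i * x ^ (n - i) * y ^ i =
      x ^ (n + 1) - (-y) ^ (n + 1) := by
  have h := geom_sum₂_mul x (-y) (n + 1)
  rw [geom_sum₂_comm, sub_neg_eq_add] at h
  rw [← h, mul_comm]
  congr 1
  refine sum_congr rfl fun i _ => ?_
  rw [neg_pow, Nat.add_sub_cancel]
  ring

variable {x y : R} {n : ℕ}

theorem pow_succ_eq_zero_of_sum_neg_one_pow_mul_eq_zero (hx : x ^ (n + 1) = 0)
    (hr : ∑ i ∈ range (n + 1), (-1) ^ i * x ^ (n - i) * y ^ i = 0) : y ^ (n + 1) = 0 := by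
  have h := add_mul_sum_neg_one_pow_mul x y n
  rw [hr, mul_zero, hx, zero_sub, neg_pow, eq_comm, neg_eq_zero] at h
  exact ((isUnit_neg_one (α := R)).pow _).mul_right_eq_zero.mp h

theorem mul_pow_mul_pow_eq_zero_of_lt (hx : x ^ (n + 1) = 0) (c : R) {i k : ℕ} (hik : i < k)
    (hk : k ≤ n) : c * x ^ (n - i) * y ^ i * (x ^ k * y ^ (n - 1 - k)) = 0 := by
  rw [show c * x ^ (n - i) * y ^ i * (x ^ k * y ^ (n - 1 - k)) =
      c * y ^ i * y ^ (n - 1 - k) * x ^ (n - i + k) by ring,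
    pow_eq_zero_of_le (by omega) hx, mul_zero]

theorem mul_pow_mul_pow_eq_zero_of_succ_lt (hy : y ^ (n + 1) = 0) (c : R) {i k : ℕ}
    (hki : k + 1 < i) (hk : k < n) : c * x ^ (n - i) * y ^ i * (x ^ k * y ^ (n - 1 - k)) = 0 := by
  rw [show c * x ^ (n - i) * y ^ i * (x ^ k * y ^ (n - 1 - k)) =
      c * x ^ (n - i) * x ^ k * y ^ (i + (n - 1 - k)) by ring,
    pow_eq_zero_of_le (by omega) hy, mul_zero]

theorem mul_pow_mul_pow_self (c : R) {k : ℕ} (hk : k < n) :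
    c * x ^ (n - k) * y ^ k * (x ^ k * y ^ (n - 1 - k)) = c * (x ^ n * y ^ (n - 1)) := by
  obtain ⟨m, rfl⟩ : ∃ m, n = k + m + 1 := ⟨n - k - 1, by omega⟩
  rw [show k + m + 1 - k = m + 1 by omega, show k + m + 1 - 1 - k = m by omega,
    Nat.add_sub_cancel]
  ring

theorem mul_pow_mul_pow_succ (c : R) {k : ℕ} (hk : k < n) :
    c * x ^ (n - (k + 1)) * y ^ (k + 1) * (x ^ k * y ^ (n - 1 - k)) =
      c * (x ^ (n - 1) * y ^ n) := by
  obtain ⟨m, rfl⟩ : ∃ m, n = k + m + 1 := ⟨n - k - 1, by omega⟩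
  rw [show k + m + 1 - (k + 1) = m by omega, show k + m + 1 - 1 - k = m by omega,
    Nat.add_sub_cancel]
  ring

section

variable (c : ℕ → R)

theorem sum_mul_pow_mul_pow_of_lt (hx : x ^ (n + 1) = 0) {j k : ℕ} (hjk : j < k) (hk : k ≤ n) :
    (∑ i ∈ range (j + 1), c i * x ^ (n - i) * y ^ i) * (x ^ k * y ^ (n - 1 - k)) = 0 := by
  rw [sum_mul]
  exact sum_eq_zero fun i hi => mul_pow_mul_pow_eq_zero_of_lt hx _ (by grind) hk

theorem sum_mul_pow_mul_pow_self (hx : x ^ (n + 1) = 0) {k : ℕ} (hk : k < n) :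
    (∑ i ∈ range (k + 1), c i * x ^ (n - i) * y ^ i) * (x ^ k * y ^ (n - 1 - k)) =
      c k * (x ^ n * y ^ (n - 1)) := by
  rw [sum_mul, sum_eq_single_of_mem k (self_mem_range_succ k) fun i hi hik =>
    mul_pow_mul_pow_eq_zero_of_lt hx _ (by grind) hk.le]
  exact mul_pow_mul_pow_self _ hk

theorem sum_mul_pow_mul_pow_of_gt (hx : x ^ (n + 1) = 0) (hy : y ^ (n + 1) = 0) {j k : ℕ}
    (hkj : k < j) (hj : j ≤ n) :
    (∑ i ∈ range (j + 1), c i * x ^ (n - i) * y ^ i) * (x ^ k * y ^ (n - 1 - k)) =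
      c k * (x ^ n * y ^ (n - 1)) + c (k + 1) * (x ^ (n - 1) * y ^ n) := by
  have hk : k < n := by omega
  rw [sum_mul, sum_eq_add_of_mem k (k + 1) (by grind) (by grind) (by omega) fun i hi hik => ?_,
    mul_pow_mul_pow_self _ hk, mul_pow_mul_pow_succ _ hk]
  rcases Nat.lt_or_gt_of_ne hik.1 with h | h
  · exact mul_pow_mul_pow_eq_zero_of_lt hx _ h hk.le
  · exact mul_pow_mul_pow_eq_zero_of_succ_lt hy _ (by omega) hk

end

theorem pow_mul_pow_pred_eq_pow_pred_mul_pow (hx : x ^ (n + 1) = 0)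
    (hr : ∑ i ∈ range (n + 1), (-1) ^ i * x ^ (n - i) * y ^ i = 0) (hn : 0 < n) :
    x ^ n * y ^ (n - 1) = x ^ (n - 1) * y ^ n := by
  have h := sum_mul_pow_mul_pow_of_gt (fun i => (-1 : R) ^ i) hx
    (pow_succ_eq_zero_of_sum_neg_one_pow_mul_eq_zero hx hr) hn le_rfl
  simp only [hr, zero_mul, pow_zero, one_mul, zero_add, pow_one, Nat.sub_zero] at h
  linear_combination -h

variable (x y n) in
def conormalClass (j : ℕ) : R :=
  ∑ i ∈ range (j + 1), (-1) ^ (j - i) * x ^ (n - i) * y ^ i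

theorem conormalClass_mul_pow_mul_pow (hx : x ^ (n + 1) = 0)
    (hr : ∑ i ∈ range (n + 1), (-1) ^ i * x ^ (n - i) * y ^ i = 0) {j k : ℕ} (hj : j < n)
    (hk : k < n) :
    conormalClass x y n j * (x ^ k * y ^ (n - 1 - k)) =
      if k = j then x ^ (n - 1) * y ^ n else 0 := by
  rw [conormalClass]
  have hxy := pow_mul_pow_pred_eq_pow_pred_mul_pow hx hr (by omega)
  rcases lt_trichotomy k j with hkj | rfl | hjk
  · have hy := pow_succ_eq_zero_of_sum_neg_one_pow_mul_eq_zero hx hr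
    rw [sum_mul_pow_mul_pow_of_gt (fun i => (-1 : R) ^ (j - i)) hx hy hkj hj.le, hxy,
      if_neg hkj.ne, show j - k = j - (k + 1) + 1 by omega, pow_succ]
    ring
  · rw [sum_mul_pow_mul_pow_self (fun i => (-1 : R) ^ (k - i)) hx hk, Nat.sub_self, pow_zero,
      one_mul, hxy, if_pos rfl]
  · rw [sum_mul_pow_mul_pow_of_lt _ hx hjk hk.le, if_neg hjk.ne']

end

/-- For n ≥ 1, with Iₙ ⊆ ℤ[X,Y] the ideal generated by X^{n+1} and
Rₙ = ∑_{i=0}^{n} (-1)^{i} X^{n-i} Y^{i}, and C_j = ∑_{i=0}^{j} (−1)^{j−i} X^{n−i} Y^{i}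
for 0 ≤ j ≤ n−1: for each 0 ≤ k ≤ n−1, C_j · X^{k} Y^{n−1−k} − X^{n−1} Y^{n} ∈ Iₙ
if k = j, and C_j · X^{k} Y^{n−1−k} ∈ Iₙ if k ≠ j. -/
theorem stmt8 (n j k : ℕ) (hn : 1 ≤ n) (hj : j ≤ n - 1) (hk : k ≤ n - 1) :
    (k = j →
      (∑ i ∈ Finset.range (j + 1),
          ((-1 : MvPolynomial (Fin 2) ℤ) ^ (j - i) * (X 0) ^ (n - i) * (X 1) ^ i)) *
            ((X 0) ^ k * (X 1) ^ (n - 1 - k)) -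
          (X 0) ^ (n - 1) * (X 1) ^ n ∈
        Ideal.span
          ({(X 0) ^ (n + 1),
            ∑ i ∈ Finset.range (n + 1),
              ((-1 : MvPolynomial (Fin 2) ℤ) ^ i * (X 0) ^ (n - i) * (X 1) ^ i)} :
            Set (MvPolynomial (Fin 2) ℤ))) ∧
    (k ≠ j →
      (∑ i ∈ Finset.range (j + 1),
          ((-1 : MvPolynomial (Fin 2) ℤ) ^ (j - i) * (X 0) ^ (n - i) * (X 1) ^ i)) *
            ((X 0) ^ k * (X 1) ^ (n - 1 - k)) ∈
        Ideal.span
          ({(X 0) ^ (n + 1),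
            ∑ i ∈ Finset.range (n + 1),
              ((-1 : MvPolynomial (Fin 2) ℤ) ^ i * (X 0) ^ (n - i) * (X 1) ^ i)} :
            Set (MvPolynomial (Fin 2) ℤ))) := by
  set I := Ideal.span ({(X 0) ^ (n + 1), ∑ i ∈ Finset.range (n + 1),
    ((-1 : MvPolynomial (Fin 2) ℤ) ^ i * (X 0) ^ (n - i) * (X 1) ^ i)} : Set _)
  have hx : (Ideal.Quotient.mk I (X 0)) ^ (n + 1) = 0 := by
    rw [← map_pow, Ideal.Quotient.eq_zero_iff_mem]
    exact Ideal.subset_span (Set.mem_insert _ _)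
  have hr : ∑ i ∈ range (n + 1), (-1) ^ i * (Ideal.Quotient.mk I (X 0)) ^ (n - i) *
      (Ideal.Quotient.mk I (X 1)) ^ i = 0 := by
    have h := Ideal.Quotient.eq_zero_iff_mem.mpr
      (Ideal.subset_span (Set.mem_insert_of_mem _ rfl) : _ ∈ I)
    simpa only [map_sum, map_mul, map_pow, map_neg, map_one] using h
  have hC := conormalClass_mul_pow_mul_pow hx hr (j := j) (k := k) (by omega) (by omega)
  rw [conormalClass] at hC
  simp only [← Ideal.Quotient.eq_zero_iff_mem, map_sub, map_sum, map_mul, map_pow, map_neg,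
    map_one]
  refine ⟨fun hkj => ?_, fun hkj => ?_⟩
  · rw [hC, if_pos hkj, sub_self]
  · rw [hC, if_neg hkj]
end

section
/- Let n ≥ 2 and let Iₙ ⊆ ℤ[X,Y] be the ideal generated by X^{n+1} and Rₙ = ∑_{i=0}^{n} (-1)^{i} X^{n-i} Y^{i}. Fix integers 0 ≤ j ≤ q ≤ n−1 and a function a : ℕ → ℤ with a(0) = 0. Then (∑_{i=0}^{n} a(i) X^{i} Y^{n−i}) · Y^{n−q+j−1} · X^{q−j} − (a(n−q+j) + a(n−q+j−1)) · X^{n−1} Y^{n} ∈ Iₙ. -/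
/-!
Pass to the quotient ring `S = ℤ[X,Y]/Iₙ`, where `X^{n+1} = 0` and `Rₙ(X,Y) = 0`. Since
`(X + Y) Rₙ = X^{n+1} ± Y^{n+1}`, also `Y^{n+1} = 0`, so every monomial of degree `2n - 1` vanishes
except `X^{n-1}Y^n` and `X^nY^{n-1}`; these two agree because `Y^{n-1}Rₙ ≡ X^nY^{n-1} - X^{n-1}Y^n`
modulo `Y^{n+1}`. Multiplying by `Y^{n-q+j-1}X^{q-j}` therefore keeps exactly the terms
`i = n - q + j` and `i = n - q + j - 1` of the sum.
-/

open MvPolynomial Finset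

/-- `Rₙ(x, y)`, the relation between `h` and `ȟ` in the cohomology ring of `ℙ(T*ℙⁿ)`. -/
def altGeomSum {R : Type*} [CommRing R] (x y : R) (n : ℕ) : R :=
  ∑ i ∈ range (n + 1), (-1) ^ i * x ^ (n - i) * y ^ i

section CommRing

variable {R S : Type*} [CommRing R] [CommRing S] (x y : R)

theorem map_altGeomSum (f : R →+* S) (n : ℕ) :
    f (altGeomSum x y n) = altGeomSum (f x) (f y) n := by
  simp [altGeomSum, map_sum]

theorem altGeomSum_succ (n : ℕ) :
    altGeomSum x y (n + 1) = x ^ (n + 1) - y * altGeomSum x y n := by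
  rw [altGeomSum, altGeomSum, sum_range_succ', mul_sum, sub_eq_add_neg, ← sum_neg_distrib,
    add_comm]
  congr 1
  · simp
  · refine sum_congr rfl fun i _ => ?_
    rw [Nat.add_sub_add_right]
    ring

theorem add_mul_altGeomSum (n : ℕ) :
    (x + y) * altGeomSum x y n = x ^ (n + 1) + (-1) ^ n * y ^ (n + 1) := by
  induction n with
  | zero => simp [altGeomSum]
  | succ n ih =>
    rw [altGeomSum_succ]
    linear_combination (-y) * ih

theorem altGeomSum_add_two (m : ℕ) :
    y ^ (m + 1) * altGeomSum x y (m + 2) =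
      x ^ (m + 2) * y ^ (m + 1) - x ^ (m + 1) * y ^ (m + 2) + y ^ (m + 3) * altGeomSum x y m := by
  rw [altGeomSum_succ, altGeomSum_succ]
  ring

variable {x y}

theorem pow_mul_pow_eq_zero {n d e : ℕ} (hx : x ^ (n + 1) = 0) (hy : y ^ (n + 1) = 0)
    (h : n + 1 ≤ d ∨ n + 1 ≤ e) : x ^ d * y ^ e = 0 := by
  rcases h with h | h
  · rw [pow_eq_zero_of_le h hx, zero_mul]
  · rw [pow_eq_zero_of_le h hy, mul_zero]

end CommRing

section Relations

variable {S : Type*} [CommRing S] {x y : S} {n : ℕ}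
  (hx : x ^ (n + 1) = 0) (hR : altGeomSum x y n = 0)
include hx hR

theorem pow_succ_eq_zero_of_altGeomSum_eq_zero : y ^ (n + 1) = 0 := by
  have h := add_mul_altGeomSum x y n
  rwa [hR, hx, mul_zero, zero_add, eq_comm, neg_one_pow_mul_eq_zero_iff] at h

theorem pow_mul_pow_pred_eq (hn : 2 ≤ n) : x ^ n * y ^ (n - 1) = x ^ (n - 1) * y ^ n := by
  obtain ⟨m, rfl⟩ : ∃ m, n = m + 2 := ⟨n - 2, by omega⟩
  have hy := pow_succ_eq_zero_of_altGeomSum_eq_zero hx hR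
  have h := altGeomSum_add_two x y m
  rw [hR, hy, mul_zero, zero_mul, add_zero] at h
  show x ^ (m + 2) * y ^ (m + 1) = x ^ (m + 1) * y ^ (m + 2)
  linear_combination -h

theorem sum_mul_pow_mul_pow_eq (hn : 2 ≤ n) {k : ℕ} (hk : k < n) (c : ℕ → S) :
    (∑ i ∈ range (n + 1), c i * x ^ i * y ^ (n - i)) * y ^ (n - k - 1) * x ^ k =
      (c (n - k) + c (n - k - 1)) * x ^ (n - 1) * y ^ n := by
  have hy := pow_succ_eq_zero_of_altGeomSum_eq_zero hx hR
  have term (i : ℕ) : c i * x ^ i * y ^ (n - i) * y ^ (n - k - 1) * x ^ k =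
      c i * (x ^ (i + k) * y ^ (n - i + (n - k - 1))) := by ring
  rw [sum_mul, sum_mul, sum_eq_add_of_mem (n - k) (n - k - 1) (by rw [mem_range]; omega)
    (by rw [mem_range]; omega) (by omega)]
  · rw [term, term, show n - k + k = n by omega, show n - (n - k) + (n - k - 1) = n - 1 by omega,
      show n - k - 1 + k = n - 1 by omega, show n - (n - k - 1) + (n - k - 1) = n by omega,
      pow_mul_pow_pred_eq hx hR hn]
    ring
  · intro i hi _
    rw [mem_range] at hi
    rw [term, pow_mul_pow_eq_zero hx hy (by omega), mul_zero]

end Relations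

theorem stmt10_general (n q j : ℕ) (hn : 2 ≤ n) (hj : j ≤ q) (hq : q ≤ n - 1)
    (a : ℕ → ℤ) :
    (∑ i ∈ Finset.range (n + 1),
        (MvPolynomial.C (a i) * (X 0) ^ i * (X 1) ^ (n - i))) *
          (X 1) ^ (n - q + j - 1) * (X 0) ^ (q - j) -
        MvPolynomial.C (a (n - q + j) + a (n - q + j - 1)) *
          (X 0) ^ (n - 1) * (X 1) ^ n ∈
      Ideal.span
        ({(X 0) ^ (n + 1),
          ∑ i ∈ Finset.range (n + 1),
            ((-1 : MvPolynomial (Fin 2) ℤ) ^ i * (X 0) ^ (n - i) * (X 1) ^ i)} :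
          Set (MvPolynomial (Fin 2) ℤ)) := by
  change _ ∈ Ideal.span ({(X 0) ^ (n + 1), altGeomSum (X 0) (X 1) n} : Set _)
  set I := Ideal.span ({(X 0) ^ (n + 1), altGeomSum (X 0) (X 1) n} :
    Set (MvPolynomial (Fin 2) ℤ))
  set π := Ideal.Quotient.mk I
  have hx : π (X 0) ^ (n + 1) = 0 := by
    rw [← map_pow, Ideal.Quotient.eq_zero_iff_mem]
    exact Ideal.subset_span (by simp)
  have hR : altGeomSum (π (X 0)) (π (X 1)) n = 0 := by
    rw [← map_altGeomSum, Ideal.Quotient.eq_zero_iff_mem]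
    exact Ideal.subset_span (by simp)
  have h := sum_mul_pow_mul_pow_eq hx hR hn (k := q - j) (by omega) fun i => π (C (a i))
  rw [show n - (q - j) = n - q + j by omega] at h
  rw [← Ideal.Quotient.mk_eq_mk_iff_sub_mem]
  simpa only [map_sum, map_mul, map_pow, map_add] using h

/-- Proposition 2.1 (first half) computation: for n ≥ 2, Iₙ = (X^{n+1}, Rₙ) ⊆ ℤ[X,Y],
0 ≤ j ≤ q ≤ n−1 and a : ℕ → ℤ with a(0) = 0:
(∑_{i=0}^{n} a(i) X^{i} Y^{n−i}) · Y^{n−q+j−1} · X^{q−j}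
 − (a(n−q+j) + a(n−q+j−1)) · X^{n−1} Y^{n} ∈ Iₙ. -/
theorem stmt10 (n q j : ℕ) (hn : 2 ≤ n) (hj : j ≤ q) (hq : q ≤ n - 1)
    (a : ℕ → ℤ) (h0 : a 0 = 0) :
    (∑ i ∈ Finset.range (n + 1),
        (MvPolynomial.C (a i) * (X 0) ^ i * (X 1) ^ (n - i))) *
          (X 1) ^ (n - q + j - 1) * (X 0) ^ (q - j) -
        MvPolynomial.C (a (n - q + j) + a (n - q + j - 1)) *
          (X 0) ^ (n - 1) * (X 1) ^ n ∈
      Ideal.span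
        ({(X 0) ^ (n + 1),
          ∑ i ∈ Finset.range (n + 1),
            ((-1 : MvPolynomial (Fin 2) ℤ) ^ i * (X 0) ^ (n - i) * (X 1) ^ i)} :
          Set (MvPolynomial (Fin 2) ℤ)) :=
  stmt10_general n q j hn hj hq a
end
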